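/- Suppose the Lorenz system with parameters σ, ρ, β > 0 admits an absorbing-ball bound of radius R, and the nudged system has exactly matching parameters σ̃ = σ, ρ̃ = ρ, β̃ = β, with coefficients μ1, μ2, μ3 ≥ 0 satisfying condition (M1) (which with zero parameter errors reads μ1 + σ ≥ 16[(3(σ + ρ)² + 2R²)/(μ2 + 1) + R²/(2(μ3 + β))]). Then the nudged system synchronizes exponentially with the Lorenz system: for all 0 ≤ t_0 ≤ t, 𝒦(t) ≤ 𝒦(t_0) e^{−(μ/2)(t − t_0)}; in particular u(t), v(t), w(t) → 0 exponentially fast as t → ∞. -/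

import Mathlib

/-- `μ = min {μ1 + σ̃, μ2 + 1, μ3 + β̃}`. -/
noncomputable def muMin (σt βt μ1 μ2 μ3 : ℝ) : ℝ :=
  min (μ1 + σt) (min (μ2 + 1) (μ3 + βt))

/-- The a priori constant `K²`. -/
noncomputable def Ksq (σ ρ β σt ρt βt μ1 μ2 μ3 R : ℝ) : ℝ :=
  2 / muMin σt βt μ1 μ2 μ3 *
    (2 * R ^ 2 * (σt - σ) ^ 2 / (μ1 + σt) + 4 * R ^ 2 * (ρt - ρ) ^ 2 / (μ2 + 1)
      + 4 * (R ^ 2 + (ρ + σ) ^ 2) * (βt - β) ^ 2 / (μ3 + βt))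

/-- The a priori constant `L²`. -/
noncomputable def Lsq (σ ρ β σt ρt βt μ1 μ2 μ3 R : ℝ) : ℝ :=
  128 / muMin σt βt μ1 μ2 μ3 *
      ((R ^ 4 + (β ^ 2 + σ ^ 2) * R ^ 2 + β ^ 2 * (ρ + σ) ^ 2) / (μ2 + 1)
        + 3 * R ^ 2 * (R ^ 2 + 2 * (ρ + σ) ^ 2 + 1) / (μ3 + βt)) *
      Ksq σ ρ β σt ρt βt μ1 μ2 μ3 R
    + 2 / muMin σt βt μ1 μ2 μ3 *
      (24 * R ^ 2 * (R ^ 2 + (ρ + σ) ^ 2 + 1) * (σt - σ) ^ 2 / (μ1 + σt)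
        + 8 * σ ^ 2 * R ^ 2 * (ρt - ρ) ^ 2 / (μ2 + 1)
        + 16 * (R ^ 4 + β ^ 2 * R ^ 2 + β ^ 2 * (ρ + σ) ^ 2) * (βt - β) ^ 2 / (μ3 + βt))

/-- Condition (M1). -/
def CondM1 (σ ρ σt ρt βt μ1 μ2 μ3 R : ℝ) : Prop :=
  μ1 + σt ≥ 16 * (((σt - σ) ^ 2 + 3 * (σ + ρ) ^ 2 + 2 * R ^ 2) / (μ2 + 1)
      + R ^ 2 / (2 * (μ3 + βt)))
  ∧ μ2 + 1 ≥ 4 * (ρt - ρ) ^ 2 / (μ1 + σt)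

/-- Condition (M2). -/
def CondM2 (σ ρ β σt ρt βt μ1 μ2 μ3 R : ℝ) : Prop :=
  μ1 + σt ≥
    32 * ((σt - σ) ^ 2 + (ρt - ρ) ^ 2 + R ^ 2 + 2 * (ρ + σ) ^ 2) / (μ2 + 1)
    + 64 * (1 / (μ2 + 1) + 1 / (μ3 + βt)) * Ksq σ ρ β σt ρt βt μ1 μ2 μ3 R
    + 16 * R ^ 2 / (μ3 + βt)

/-- The energy `𝒦(t) = (u(t)² + v(t)² + w(t)²)/2` of the differences. -/
noncomputable def Kfun (x y z xt yt zt : ℝ → ℝ) (t : ℝ) : ℝ :=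
  ((xt t - x t) ^ 2 + (yt t - y t) ^ 2 + (zt t - z t) ^ 2) / 2

/-- The energy `ℒ(t) = (u'(t)² + v'(t)² + w'(t)²)/2` of the derivatives of the differences. -/
noncomputable def Lfun (x y z xt yt zt : ℝ → ℝ) (t : ℝ) : ℝ :=
  ((deriv (fun s => xt s - x s) t) ^ 2 + (deriv (fun s => yt s - y s) t) ^ 2
    + (deriv (fun s => zt s - z s) t) ^ 2) / 2


/-!
Write `u, v, w` for the differences and `A = μ1 + σ`, `B = μ2 + 1`, `C = μ3 + β`. Subtracting
the two systems, the quadratic terms mostly cancel and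
`𝒦' = -A u² - B v² - C w² - (z - ρ - σ) u v + y u w`.
On the absorbing ball `|z - ρ - σ|, |y| ≤ R`, so by Young's inequality the two cross terms are
at most `(R²/B + R²/C) u²/2 + B v²/2 + C w²/2`, and (M1) gives `R²/B + R²/C ≤ A`. Hence
`𝒦' ≤ -(A u² + B v² + C w²)/2 ≤ -μ 𝒦`, and Grönwall's inequality gives the exponential decay.
-/

open Filter Topology Real Set

theorem two_mul_mul_le_div_add_mul {B : ℝ} (hB : 0 < B) (p q : ℝ) :
    2 * (p * q) ≤ p ^ 2 / B + B * q ^ 2 := by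
  have h : p ^ 2 / B + B * q ^ 2 - 2 * (p * q) = (p - B * q) ^ 2 / B := by
    field_simp
    ring
  linarith [div_nonneg (sq_nonneg (p - B * q)) hB.le]

theorem mul_mul_add_mul_mul_le_of_sq_le {A B C R a b u v w : ℝ} (hB : 0 < B) (hC : 0 < C)
    (ha : a ^ 2 ≤ R ^ 2) (hb : b ^ 2 ≤ R ^ 2) (hR : R ^ 2 / B + R ^ 2 / C ≤ A) :
    a * u * v + b * u * w ≤ A / 2 * u ^ 2 + B / 2 * v ^ 2 + C / 2 * w ^ 2 := by
  have hv := two_mul_mul_le_div_add_mul hB (a * u) v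
  have hw := two_mul_mul_le_div_add_mul hC (b * u) w
  have hau : (a * u) ^ 2 / B ≤ R ^ 2 / B * u ^ 2 := by
    rw [div_mul_eq_mul_div, mul_pow]
    gcongr
  have hbu : (b * u) ^ 2 / C ≤ R ^ 2 / C * u ^ 2 := by
    rw [div_mul_eq_mul_div, mul_pow]
    gcongr
  linarith [mul_le_mul_of_nonneg_right hR (sq_nonneg u)]

theorem sq_div_add_sq_div_le_of_M1 {A B C R s : ℝ} (hB : 0 < B) (hC : 0 < C)
    (hM1 : A ≥ 16 * ((3 * s ^ 2 + 2 * R ^ 2) / B + R ^ 2 / (2 * C))) :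
    R ^ 2 / B + R ^ 2 / C ≤ A := by
  have hRB : R ^ 2 / B ≤ (3 * s ^ 2 + 2 * R ^ 2) / B := by
    gcongr
    nlinarith [sq_nonneg s, sq_nonneg R]
  have hRC : R ^ 2 / C = 2 * (R ^ 2 / (2 * C)) := by
    field_simp
  have : 0 ≤ R ^ 2 / B := by positivity
  have : 0 ≤ R ^ 2 / (2 * C) := by positivity
  linarith

theorem le_mul_exp_of_hasDerivAt_le_neg_mul {f f' : ℝ → ℝ} {a c : ℝ}
    (hf : ∀ t ≥ a, HasDerivAt f (f' t) t) (bound : ∀ t ≥ a, f' t ≤ -c * f t)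
    {t₀ t : ℝ} (ht₀ : a ≤ t₀) (ht : t₀ ≤ t) :
    f t ≤ f t₀ * exp (-c * (t - t₀)) := by
  have hf₀ : ∀ s ∈ Icc t₀ t, HasDerivAt f (f' s) s := fun s hs => hf s (ht₀.trans hs.1)
  have := le_gronwallBound_of_liminf_deriv_right_le (K := -c) (ε := 0)
    (fun s hs => (hf₀ s hs).continuousAt.continuousWithinAt)
    (fun s hs _ hr => (hf₀ s (Ico_subset_Icc_self hs)).hasDerivWithinAt.liminf_right_slope_le hr)
    le_rfl (fun s hs => (bound s (ht₀.trans hs.1)).trans_eq (add_zero _).symm) t ⟨ht, le_rfl⟩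
  rwa [gronwallBound_ε0] at this

theorem tendsto_const_mul_exp_neg_mul_sub (C : ℝ) {c : ℝ} (hc : 0 < c) (t₀ : ℝ) :
    Tendsto (fun t => C * exp (-c * (t - t₀))) atTop (𝓝 0) := by
  have : Tendsto (fun t => -c * (t - t₀)) atTop atBot :=
    (tendsto_atTop_add_const_right _ (-t₀) tendsto_id).const_mul_atTop_of_neg (neg_lt_zero.2 hc)
  simpa using (tendsto_exp_atBot.comp this).const_mul C

theorem tendsto_nhds_zero_of_sq_le {α : Type*} {l : Filter α} {f g : α → ℝ}
    (hg : Tendsto g l (𝓝 0)) (hfg : ∀ᶠ t in l, f t ^ 2 ≤ g t) : Tendsto f l (𝓝 0) := by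
  have : Tendsto (fun t => √(g t)) l (𝓝 0) := by simpa using hg.sqrt
  refine squeeze_zero_norm' ?_ this
  filter_upwards [hfg] with t ht
  rw [Real.norm_eq_abs, ← Real.sqrt_sq_eq_abs]
  exact Real.sqrt_le_sqrt ht

theorem hasDerivAt_Kfun {x y z xt yt zt : ℝ → ℝ} {x' y' z' xt' yt' zt' t : ℝ}
    (hx : HasDerivAt x x' t) (hy : HasDerivAt y y' t) (hz : HasDerivAt z z' t)
    (hxt : HasDerivAt xt xt' t) (hyt : HasDerivAt yt yt' t) (hzt : HasDerivAt zt zt' t) :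
    HasDerivAt (Kfun x y z xt yt zt)
      ((xt t - x t) * (xt' - x') + (yt t - y t) * (yt' - y') + (zt t - z t) * (zt' - z')) t := by
  have := ((((hxt.sub hx).pow 2).add ((hyt.sub hy).pow 2)).add ((hzt.sub hz).pow 2)).div_const 2
  refine this.congr_deriv ?_
  simp only [Pi.sub_apply]
  ring

theorem lorenz_nudged_energy_deriv_le {σ ρ β μ1 μ2 μ3 R X Y Z Xt Yt Zt : ℝ}
    (hβ : 0 < β) (hμ2 : 0 ≤ μ2) (hμ3 : 0 ≤ μ3)
    (hball : X ^ 2 + Y ^ 2 + (Z - ρ - σ) ^ 2 ≤ R ^ 2)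
    (hR : R ^ 2 / (μ2 + 1) + R ^ 2 / (μ3 + β) ≤ μ1 + σ) :
    (Xt - X) * ((σ * (Yt - Xt) - μ1 * (Xt - X)) - σ * (Y - X))
      + (Yt - Y) * ((ρ * Xt - Yt - Xt * Zt - μ2 * (Yt - Y)) - (ρ * X - Y - X * Z))
      + (Zt - Z) * ((Xt * Yt - β * Zt - μ3 * (Zt - Z)) - (X * Y - β * Z))
      ≤ -muMin σ β μ1 μ2 μ3 * (((Xt - X) ^ 2 + (Yt - Y) ^ 2 + (Zt - Z) ^ 2) / 2) := by
  set u := Xt - X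
  set v := Yt - Y
  set w := Zt - Z
  have hcross := mul_mul_add_mul_mul_le_of_sq_le (a := -(Z - ρ - σ)) (b := Y) (u := u) (v := v)
    (w := w) (by positivity : (0 : ℝ) < μ2 + 1) (by positivity : 0 < μ3 + β)
    (by nlinarith [sq_nonneg X, sq_nonneg Y]) (by nlinarith [sq_nonneg X, sq_nonneg (Z - ρ - σ)])
    hR
  have hμA : muMin σ β μ1 μ2 μ3 ≤ μ1 + σ := min_le_left _ _
  have hμB : muMin σ β μ1 μ2 μ3 ≤ μ2 + 1 := (min_le_right _ _).trans (min_le_left _ _)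
  have hμC : muMin σ β μ1 μ2 μ3 ≤ μ3 + β := (min_le_right _ _).trans (min_le_right _ _)
  calc _ = -(μ1 + σ) * u ^ 2 - (μ2 + 1) * v ^ 2 - (μ3 + β) * w ^ 2
        + (-(Z - ρ - σ) * u * v + Y * u * w) := by ring
    _ ≤ -((μ1 + σ) * u ^ 2 + (μ2 + 1) * v ^ 2 + (μ3 + β) * w ^ 2) / 2 := by linarith
    _ ≤ _ := by
      linarith [mul_le_mul_of_nonneg_right hμA (sq_nonneg u),
        mul_le_mul_of_nonneg_right hμB (sq_nonneg v),
        mul_le_mul_of_nonneg_right hμC (sq_nonneg w)]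

theorem lorenz_nudged_synchronization_general (σ ρ β μ1 μ2 μ3 R : ℝ)
    (hσ : 0 < σ) (hβ : 0 < β)
    (hμ1 : 0 ≤ μ1) (hμ2 : 0 ≤ μ2) (hμ3 : 0 ≤ μ3)
    (x y z xt yt zt : ℝ → ℝ)
    (hx : ∀ t ≥ (0:ℝ), HasDerivAt x (σ * (y t - x t)) t)
    (hy : ∀ t ≥ (0:ℝ), HasDerivAt y (ρ * x t - y t - x t * z t) t)
    (hz : ∀ t ≥ (0:ℝ), HasDerivAt z (x t * y t - β * z t) t)
    (hxt : ∀ t ≥ (0:ℝ), HasDerivAt xt (σ * (yt t - xt t) - μ1 * (xt t - x t)) t)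
    (hyt : ∀ t ≥ (0:ℝ),
      HasDerivAt yt (ρ * xt t - yt t - xt t * zt t - μ2 * (yt t - y t)) t)
    (hzt : ∀ t ≥ (0:ℝ),
      HasDerivAt zt (xt t * yt t - β * zt t - μ3 * (zt t - z t)) t)
    (hball : ∀ t ≥ (0:ℝ), (x t) ^ 2 + (y t) ^ 2 + (z t - ρ - σ) ^ 2 ≤ R ^ 2)
    (hM1 : μ1 + σ ≥ 16 * ((3 * (σ + ρ) ^ 2 + 2 * R ^ 2) / (μ2 + 1)
        + R ^ 2 / (2 * (μ3 + β)))) :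
    (∀ t0 t : ℝ, 0 ≤ t0 → t0 ≤ t →
      Kfun x y z xt yt zt t ≤
        Kfun x y z xt yt zt t0 * Real.exp (-(muMin σ β μ1 μ2 μ3 / 2) * (t - t0))) ∧
    Filter.Tendsto (fun t => xt t - x t) Filter.atTop (nhds 0) ∧
    Filter.Tendsto (fun t => yt t - y t) Filter.atTop (nhds 0) ∧
    Filter.Tendsto (fun t => zt t - z t) Filter.atTop (nhds 0) := by
  set μ := muMin σ β μ1 μ2 μ3
  set K := Kfun x y z xt yt zt
  have hμ : 0 < μ := lt_min (by positivity) (lt_min (by positivity) (by positivity))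
  have hR := sq_div_add_sq_div_le_of_M1 (by positivity) (by positivity) hM1
  have hK t (ht : t ≥ 0) := hasDerivAt_Kfun (hx t ht) (hy t ht) (hz t ht)
    (hxt t ht) (hyt t ht) (hzt t ht)
  have hK' t (ht : t ≥ 0) : _ ≤ -μ * K t :=
    lorenz_nudged_energy_deriv_le (Xt := xt t) (Yt := yt t) (Zt := zt t)
      hβ hμ2 hμ3 (hball t ht) hR
  have hK_nonneg t : 0 ≤ K t := by unfold K Kfun; positivity
  have decay t₀ t (ht₀ : 0 ≤ t₀) (ht : t₀ ≤ t) : K t ≤ K t₀ * exp (-(μ / 2) * (t - t₀)) :=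
    le_mul_exp_of_hasDerivAt_le_neg_mul hK
      (fun t ht => (hK' t ht).trans (by linarith [mul_nonneg hμ.le (hK_nonneg t)])) ht₀ ht
  refine ⟨decay, ?_, ?_, ?_⟩ <;>
  · refine tendsto_nhds_zero_of_sq_le
      (tendsto_const_mul_exp_neg_mul_sub (2 * K 0) (half_pos hμ) 0) ?_
    filter_upwards [eventually_ge_atTop 0] with t ht
    have := decay 0 t le_rfl ht
    simp only [K, Kfun] at this ⊢
    linarith [sq_nonneg (xt t - x t), sq_nonneg (yt t - y t), sq_nonneg (zt t - z t)]

/-- **Synchronization of the nudged system when the parameters are exactly known.**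
If `σ̃ = σ`, `ρ̃ = ρ`, `β̃ = β` and the nudging coefficients satisfy condition (M1)
(which with zero parameter errors reads
`μ1 + σ ≥ 16[(3(σ+ρ)² + 2R²)/(μ2+1) + R²/(2(μ3+β))]`), then
`𝒦(t) ≤ 𝒦(t₀) e^{−(μ/2)(t−t₀)}` for all `0 ≤ t₀ ≤ t`; in particular the differences
`u, v, w` tend to `0` exponentially fast as `t → ∞`. -/
theorem lorenz_nudged_synchronization (σ ρ β μ1 μ2 μ3 R : ℝ)
    (hσ : 0 < σ) (hρ : 0 < ρ) (hβ : 0 < β)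
    (hμ1 : 0 ≤ μ1) (hμ2 : 0 ≤ μ2) (hμ3 : 0 ≤ μ3)
    (x y z xt yt zt : ℝ → ℝ)
    (hx : ∀ t ≥ (0:ℝ), HasDerivAt x (σ * (y t - x t)) t)
    (hy : ∀ t ≥ (0:ℝ), HasDerivAt y (ρ * x t - y t - x t * z t) t)
    (hz : ∀ t ≥ (0:ℝ), HasDerivAt z (x t * y t - β * z t) t)
    (hxt : ∀ t ≥ (0:ℝ), HasDerivAt xt (σ * (yt t - xt t) - μ1 * (xt t - x t)) t)
    (hyt : ∀ t ≥ (0:ℝ),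
      HasDerivAt yt (ρ * xt t - yt t - xt t * zt t - μ2 * (yt t - y t)) t)
    (hzt : ∀ t ≥ (0:ℝ),
      HasDerivAt zt (xt t * yt t - β * zt t - μ3 * (zt t - z t)) t)
    (hball : ∀ t ≥ (0:ℝ), (x t) ^ 2 + (y t) ^ 2 + (z t - ρ - σ) ^ 2 ≤ R ^ 2)
    (hM1 : μ1 + σ ≥ 16 * ((3 * (σ + ρ) ^ 2 + 2 * R ^ 2) / (μ2 + 1)
        + R ^ 2 / (2 * (μ3 + β)))) :
    (∀ t0 t : ℝ, 0 ≤ t0 → t0 ≤ t →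
      Kfun x y z xt yt zt t ≤
        Kfun x y z xt yt zt t0 * Real.exp (-(muMin σ β μ1 μ2 μ3 / 2) * (t - t0))) ∧
    Filter.Tendsto (fun t => xt t - x t) Filter.atTop (nhds 0) ∧
    Filter.Tendsto (fun t => yt t - y t) Filter.atTop (nhds 0) ∧
    Filter.Tendsto (fun t => zt t - z t) Filter.atTop (nhds 0) :=
  lorenz_nudged_synchronization_general σ ρ β μ1 μ2 μ3 R hσ hβ hμ1 hμ2 hμ3 x y z xt yt zt hx hy hz
    hxt hyt hzt hball hM1
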